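/- Let a(y) = max(0, 1−|y|) be the tent function, and for α > 0, r ∈ ℝ set a_α(y) = (1/α)·a(y/α) and a^r_α(y) = (1/α)·a((y−r)/α). Fix (x₁,x₂) ∈ ℝ × (0,∞) and r ∈ ℝ. Then for every α > 0, γ^{a^r_{α/(2√x₂)}}(x₁,x₂) = 2√x₂ · ((H H^T) * a_α)(x₁ + 2√x₂ r), i.e., each (j,k) entry equals 2√x₂ · ((h_{j−1}h_{k−1}) * a_α)(x₁ + 2√x₂ r); consequently lim_{α→0⁺} γ^{a^r_{α/(2√x₂)}}(x₁,x₂) = 2√x₂ · H(x₁ + 2√x₂ r)[H(x₁ + 2√x₂ r)]^T. -/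

import Mathlib

open MeasureTheory Filter Topology

noncomputable section

/-- The physicists' Hermite polynomial `H_m(y) = (−1)^m e^{y²} (d/dy)^m e^{−y²}`. -/
def hermiteH (m : ℕ) (y : ℝ) : ℝ :=
  (-1 : ℝ) ^ m * Real.exp (y ^ 2) * iteratedDeriv m (fun x => Real.exp (-x ^ 2)) y

/-- The Hermite function `h_m(y) = (2^m m! √π)^{−1/2} H_m(y) e^{−y²/2}`. -/
def hermiteFun (m : ℕ) (y : ℝ) : ℝ :=
  (Real.sqrt (2 ^ m * m.factorial * Real.sqrt Real.pi))⁻¹ * hermiteH m y *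
    Real.exp (-y ^ 2 / 2)

/-- The matrix `H(y)[H(y)]ᵀ`, where `H(y) = (h_0(y), …, h_{n−1}(y))ᵀ`. -/
def HHT (n : ℕ) (y : ℝ) : Matrix (Fin n) (Fin n) ℝ :=
  Matrix.of fun j k : Fin n => hermiteFun j y * hermiteFun k y

/-- `γ^a(x₁,x₂) = ∫_ℝ a((−x₁+y)/(2√x₂)) H(y)[H(y)]ᵀ dy` as a complex `n × n` matrix. -/
def gammaA (n : ℕ) (a : ℝ → ℂ) (x₁ x₂ : ℝ) : Matrix (Fin n) (Fin n) ℂ :=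
  Matrix.of fun j k : Fin n =>
    ∫ y : ℝ, a ((-x₁ + y) / (2 * Real.sqrt x₂)) * (HHT n y j k : ℂ)

/-- The tent function `a(y) = max(0, 1 − |y|)`. -/
def tent (y : ℝ) : ℝ := max 0 (1 - |y|)

/-- `a^r_α(y) = (1/α) a((y − r)/α)`. -/
def tentShift (α r y : ℝ) : ℝ := (1 / α) * tent ((y - r) / α)

/-- Convolution on `ℝ`: `(f ⋆ g)(x) = ∫ f(x − y) g(y) dy`. -/
def conv (f g : ℝ → ℝ) (x : ℝ) : ℝ := ∫ y : ℝ, f (x - y) * g y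

/-! Substituting `y ↦ x₁ + 2√x₂ r − y` turns the symbol `a^r_{α/(2√x₂)}((y − x₁)/(2√x₂))` into
`2√x₂ a_α(y)` (the tent is even), so each entry of `γ` is `2√x₂` times a convolution with `a_α`.
The tents `a_α` are nonnegative, have integral one and are supported in `(−α, α)`, i.e. they form
an approximate identity, so the convolution with the continuous `h_j h_k` converges pointwise. -/

open scoped Convolution

lemma tent_nonneg (y : ℝ) : 0 ≤ tent y := le_max_left _ _

lemma tent_neg (y : ℝ) : tent (-y) = tent y := by simp [tent]

lemma tent_eq_zero_of_one_le_abs {y : ℝ} (hy : 1 ≤ |y|) : tent y = 0 :=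
  max_eq_left (by linarith)

lemma continuous_tent : Continuous tent := by unfold tent; fun_prop

lemma support_tent_subset : Function.support tent ⊆ Set.Ioc (-1) 1 := fun y hy =>
  have hy' : |y| < 1 := not_le.1 fun h => hy (tent_eq_zero_of_one_le_abs h)
  ⟨(abs_lt.1 hy').1, (abs_lt.1 hy').2.le⟩

lemma integral_tent : ∫ y : ℝ, tent y = 1 := by
  have hright : ∫ t in (0 : ℝ)..1, tent t = 1 / 2 := by
    rw [intervalIntegral.integral_congr (g := fun t => 1 - t) fun t ht => ?_]
    · rw [intervalIntegral.integral_sub intervalIntegrable_const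
        intervalIntegral.intervalIntegrable_id, integral_id]
      norm_num
    · rw [Set.uIcc_of_le zero_le_one] at ht
      simp [tent, abs_of_nonneg ht.1, ht.2]
  have hleft : ∫ t in (-1 : ℝ)..0, tent t = 1 / 2 := by
    simpa [tent_neg, hright] using (intervalIntegral.integral_comp_neg (a := 0) (b := 1) tent).symm
  have hint := fun a b => continuous_tent.intervalIntegrable (μ := volume) a b
  rw [← intervalIntegral.integral_eq_integral_of_support_subset support_tent_subset,
    ← intervalIntegral.integral_add_adjacent_intervals (hint _ 0) (hint 0 _), hleft, hright]
  norm_num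

lemma integral_tentShift_zero {α : ℝ} (hα : 0 < α) : ∫ y : ℝ, tentShift α 0 y = 1 := by
  simp only [tentShift, sub_zero]
  rw [integral_const_mul, Measure.integral_comp_div (fun y => tent y) α, integral_tent,
    abs_of_pos hα, smul_eq_mul, mul_one, one_div, inv_mul_cancel₀ hα.ne']

lemma support_tentShift_zero_subset {α : ℝ} (hα : 0 < α) :
    Function.support (tentShift α 0) ⊆ Metric.ball 0 α := by
  intro y hy
  rw [Metric.mem_ball, dist_zero_right, Real.norm_eq_abs, ← div_lt_one hα, ← abs_of_pos hα,
    ← abs_div]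
  by_contra! h
  exact hy (by simp [tentShift, tent_eq_zero_of_one_le_abs h])

lemma tentShift_sub_div {β : ℝ} (hβ : β ≠ 0) (α r y : ℝ) :
    tentShift (α / β) r (r - y / β) = β * tentShift α 0 y := by
  unfold tentShift
  rw [show (r - y / β - r) / (α / β) = -((y - 0) / α) by field_simp; ring, tent_neg]
  field_simp

lemma conv_eq_convolution (f g : ℝ → ℝ) (x : ℝ) :
    conv f g x = (g ⋆[ContinuousLinearMap.lsmul ℝ ℝ, volume] f) x := by
  simp only [conv, convolution_lsmul, smul_eq_mul, mul_comm]

lemma tendsto_conv_tentShift {f : ℝ → ℝ} {x : ℝ} (hf : AEStronglyMeasurable f volume)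
    (hfx : ContinuousAt f x) :
    Tendsto (fun α => conv f (tentShift α 0) x) (𝓝[>] 0) (𝓝 (f x)) := by
  simp only [conv_eq_convolution]
  refine convolution_tendsto_right (g := fun _ => f) ?_ ?_ ?_ (.of_forall fun _ => hf)
    (hfx.tendsto.comp tendsto_snd) tendsto_const_nhds
  · filter_upwards [self_mem_nhdsWithin] with α (hα : 0 < α) y
    exact mul_nonneg (by positivity) (tent_nonneg _)
  · filter_upwards [self_mem_nhdsWithin] with α hα
    exact integral_tentShift_zero hα
  · rw [tendsto_smallSets_iff]
    intro s hs
    obtain ⟨ε, hε, hball⟩ := Metric.mem_nhds_iff.1 hs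
    filter_upwards [Ioo_mem_nhdsGT hε] with α hα
    exact (support_tentShift_zero_subset hα.1).trans
      ((Metric.ball_subset_ball hα.2.le).trans hball)

lemma integral_tentShift_mul_eq_conv {β : ℝ} (hβ : β ≠ 0) (f : ℝ → ℝ) (α r x₁ : ℝ) :
    ∫ y, tentShift (α / β) r ((-x₁ + y) / β) * f y = β * conv f (tentShift α 0) (x₁ + β * r) := by
  rw [← integral_sub_left_eq_self _ volume (x₁ + β * r), conv, ← integral_const_mul]
  congr 1 with y
  have hy : (-x₁ + (x₁ + β * r - y)) / β = r - y / β := by field_simp; ring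
  rw [hy, tentShift_sub_div hβ]
  ring

lemma continuous_hermiteFun (m : ℕ) : Continuous (hermiteFun m) := by
  have hg : ContDiff ℝ ⊤ fun x : ℝ => Real.exp (-x ^ 2) := by fun_prop
  have hderiv := hg.continuous_iteratedDeriv m le_top
  unfold hermiteFun hermiteH
  fun_prop

lemma gammaA_tentShift_eq_conv (n : ℕ) {x₂ : ℝ} (hx₂ : 0 < x₂) (x₁ r α : ℝ) :
    gammaA n (fun y => ((tentShift (α / (2 * Real.sqrt x₂)) r y : ℝ) : ℂ)) x₁ x₂ =
      Matrix.of fun j k : Fin n =>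
        ((2 * Real.sqrt x₂ *
          conv (fun s => hermiteFun j s * hermiteFun k s) (tentShift α 0)
            (x₁ + 2 * Real.sqrt x₂ * r) : ℝ) : ℂ) := by
  ext j k
  simp only [gammaA, HHT, Matrix.of_apply, ← Complex.ofReal_mul]
  rw [integral_complex_ofReal, integral_tentShift_mul_eq_conv (by positivity)]

theorem gammaA_tent_convolution_general (n : ℕ) (x₁ x₂ : ℝ) (hx₂ : 0 < x₂)
    (r : ℝ) :
    (∀ α : ℝ, 0 < α →
      gammaA n (fun y => ((tentShift (α / (2 * Real.sqrt x₂)) r y : ℝ) : ℂ)) x₁ x₂ =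
        Matrix.of fun j k : Fin n =>
          ((2 * Real.sqrt x₂ *
            conv (fun s => hermiteFun j s * hermiteFun k s) (tentShift α 0)
              (x₁ + 2 * Real.sqrt x₂ * r) : ℝ) : ℂ)) ∧
    Tendsto
      (fun α : ℝ =>
        gammaA n (fun y => ((tentShift (α / (2 * Real.sqrt x₂)) r y : ℝ) : ℂ)) x₁ x₂)
      (𝓝[>] (0 : ℝ))
      (𝓝 (Matrix.of fun j k : Fin n =>
        ((2 * Real.sqrt x₂ * (hermiteFun j (x₁ + 2 * Real.sqrt x₂ * r) *
          hermiteFun k (x₁ + 2 * Real.sqrt x₂ * r)) : ℝ) : ℂ))) := by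
  refine ⟨fun α _ => gammaA_tentShift_eq_conv n hx₂ x₁ r α, ?_⟩
  simp only [gammaA_tentShift_eq_conv n hx₂]
  refine tendsto_pi_nhds.2 fun j => tendsto_pi_nhds.2 fun k => ?_
  have hc : Continuous fun s => hermiteFun j s * hermiteFun k s :=
    (continuous_hermiteFun j).mul (continuous_hermiteFun k)
  exact (Complex.continuous_ofReal.tendsto _).comp
    ((tendsto_conv_tentShift hc.aestronglyMeasurable hc.continuousAt).const_mul _)

/-- For the tent symbols `a^r_{α/(2√x₂)}`, the matrix
`γ^{a^r_{α/(2√x₂)}}(x₁,x₂)` equals `2√x₂ ((H Hᵀ) ⋆ a_α)(x₁ + 2√x₂ r)` entrywise, and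
as `α → 0⁺` it converges to `2√x₂ H(x₁+2√x₂ r)[H(x₁+2√x₂ r)]ᵀ`. -/
theorem gammaA_tent_convolution (n : ℕ) (hn : 1 ≤ n) (x₁ x₂ : ℝ) (hx₂ : 0 < x₂)
    (r : ℝ) :
    (∀ α : ℝ, 0 < α →
      gammaA n (fun y => ((tentShift (α / (2 * Real.sqrt x₂)) r y : ℝ) : ℂ)) x₁ x₂ =
        Matrix.of fun j k : Fin n =>
          ((2 * Real.sqrt x₂ *
            conv (fun s => hermiteFun j s * hermiteFun k s) (tentShift α 0)
              (x₁ + 2 * Real.sqrt x₂ * r) : ℝ) : ℂ)) ∧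
    Tendsto
      (fun α : ℝ =>
        gammaA n (fun y => ((tentShift (α / (2 * Real.sqrt x₂)) r y : ℝ) : ℂ)) x₁ x₂)
      (𝓝[>] (0 : ℝ))
      (𝓝 (Matrix.of fun j k : Fin n =>
        ((2 * Real.sqrt x₂ * (hermiteFun j (x₁ + 2 * Real.sqrt x₂ * r) *
          hermiteFun k (x₁ + 2 * Real.sqrt x₂ * r)) : ℝ) : ℂ))) :=
  gammaA_tent_convolution_general n x₁ x₂ hx₂ r
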